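/- On the n×n torus (n ≥ 4), let M = {(0,0),(1,0),(1,1),(1,2)} be marked. Then the state |φ_stat^a⟩ = Σ_{i,j}|i,j⟩|s_cᵃ⟩ − (4+l)a(|0,0,→⟩ + |1,0,←⟩ + |1,1,↑⟩ + |1,2,↓⟩) is fixed by the lackadaisical search step: U'|φ_stat^a⟩ = |φ_stat^a⟩ for every real a. -/

import Mathlib

/-!
The shift swaps the four defect amplitudes of `φ` in pairs, `(0,0,→) ↔ (1,0,←)` and
`(1,1,↑) ↔ (1,2,↓)`, and preserves the uniform part, so `S φ = φ`; it remains to see that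
`(I ⊗ C)(Q ⊗ I₅)` fixes `φ` vertex by vertex. At an unmarked vertex the coin vector is
`|s_cᵃ⟩ = a√(4+l) |s_c⟩`, fixed by the reflection `C`. At a marked vertex it is
`|s_cᵃ⟩ − (4+l)a |d⟩` for a non-loop direction `d`, which is orthogonal to `|s_c⟩` because
`⟨s_c|s_cᵃ⟩ = a√(4+l) = (4+l)a ⟨s_c|d⟩`; so `C` negates it and undoes the sign flip of `Q`.
-/

open Matrix

/-- Basis index of the walk space on the `n×n` torus with a 5-dimensional coin:
position `(i,j) ∈ (ℤ/nℤ)²` and coin `c ∈ Fin 5` with `0=↑, 1=↓, 2=←, 3=→, 4=↺`. -/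
abbrev WalkIdx (n : ℕ) := ZMod n × ZMod n × Fin 5

/-- The action of the flip-flop shift with self-loop on basis indices. -/
def shiftIdx (n : ℕ) : WalkIdx n → WalkIdx n
  | (i, j, c) =>
    if c = 0 then (i, j + 1, 1)
    else if c = 1 then (i, j - 1, 0)
    else if c = 2 then (i - 1, j, 3)
    else if c = 3 then (i + 1, j, 2)
    else (i, j, c)

/-- The flip-flop shift operator with self-loop, as a matrix:
`S|i,j,↑⟩=|i,j+1,↓⟩`, `S|i,j,↓⟩=|i,j−1,↑⟩`, `S|i,j,←⟩=|i−1,j,→⟩`,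
`S|i,j,→⟩=|i+1,j,←⟩`, `S|i,j,↺⟩=|i,j,↺⟩` (indices mod `n`). -/
noncomputable def shiftOp (n : ℕ) : Matrix (WalkIdx n) (WalkIdx n) ℂ :=
  fun x y => if x = shiftIdx n y then 1 else 0

/-- The Grover self-loop coin state `|s_c⟩`. -/
noncomputable def scState (l : ℝ) : Fin 5 → ℂ :=
  fun c => if c = 4 then (Real.sqrt l : ℂ) / (Real.sqrt (4 + l) : ℂ)
           else 1 / (Real.sqrt (4 + l) : ℂ)

/-- The 5-dimensional Grover coin `C = 2|s_c⟩⟨s_c| − I₅`. -/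
noncomputable def groverCoin (l : ℝ) : Matrix (Fin 5) (Fin 5) ℂ :=
  (2 : ℂ) • Matrix.vecMulVec (scState l) (star (scState l)) - 1

/-- The coin operator `I ⊗ C` on the full walk space. -/
noncomputable def coinOp (n : ℕ) (l : ℝ) : Matrix (WalkIdx n) (WalkIdx n) ℂ :=
  fun x y => if x.1 = y.1 ∧ x.2.1 = y.2.1 then groverCoin l x.2.2 y.2.2 else 0

/-- One step of the lackadaisical walk (without search): `U = S·(I ⊗ C)`. -/
noncomputable def walkOp (n : ℕ) [NeZero n] (l : ℝ) : Matrix (WalkIdx n) (WalkIdx n) ℂ :=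
  shiftOp n * coinOp n l

/-- The query `Q ⊗ I₅`: flips the sign at the marked vertices `M`. -/
noncomputable def queryOp (n : ℕ) (M : Finset (ZMod n × ZMod n)) :
    Matrix (WalkIdx n) (WalkIdx n) ℂ :=
  fun x y => if x = y then (if (x.1, x.2.1) ∈ M then -1 else 1) else 0

/-- One step of the search walk: `U' = S·(I⊗C)·(Q⊗I₅)`. -/
noncomputable def searchOp (n : ℕ) [NeZero n] (l : ℝ) (M : Finset (ZMod n × ZMod n)) :
    Matrix (WalkIdx n) (WalkIdx n) ℂ :=
  shiftOp n * coinOp n l * queryOp n M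

/-- The uniform initial state `|ψ(0)⟩ = (1/n) Σ_{i,j} |i,j⟩ ⊗ |s_c⟩`. -/
noncomputable def psi0 (n : ℕ) (l : ℝ) : WalkIdx n → ℂ :=
  fun x => (1 / (n : ℂ)) * scState l x.2.2

/-- The coin part `|s_cᵃ⟩ = a(|↑⟩+|↓⟩+|←⟩+|→⟩+√l|↺⟩)` of the stationary state. -/
noncomputable def scA (l a : ℝ) : Fin 5 → ℂ :=
  fun c => (a : ℂ) * (if c = 4 then (Real.sqrt l : ℂ) else 1)

/-- The stationary state for the marked block `M = {(0,0),(1,0),(1,1),(1,2)}`: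
`|φ_stat^a⟩ = Σ_{i,j}|i,j⟩|s_cᵃ⟩ − (4+l)a(|0,0,→⟩+|1,0,←⟩+|1,1,↑⟩+|1,2,↓⟩)`. -/
noncomputable def phiStatBlock (n : ℕ) (l a : ℝ) : WalkIdx n → ℂ :=
  fun x => scA l a x.2.2 -
    (if x = ((0 : ZMod n), (0 : ZMod n), (3 : Fin 5)) ∨
        x = ((1 : ZMod n), (0 : ZMod n), (2 : Fin 5)) ∨
        x = ((1 : ZMod n), (1 : ZMod n), (0 : Fin 5)) ∨
        x = ((1 : ZMod n), (2 : ZMod n), (1 : Fin 5))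
     then ((4 + l : ℝ) : ℂ) * (a : ℂ) else 0)

theorem reflection_mulVec {ι R : Type*} [Fintype ι] [DecidableEq ι] [CommRing R] [StarRing R]
    (s w : ι → R) :
    ((2 : R) • vecMulVec s (star s) - 1) *ᵥ w = (2 * (star s ⬝ᵥ w)) • s - w := by
  rw [sub_mulVec, smul_mulVec, vecMulVec_mulVec, one_mulVec, op_smul_eq_smul, smul_smul]

theorem reflection_mulVec_of_dotProduct_eq_one {ι R : Type*} [Fintype ι] [DecidableEq ι]
    [CommRing R] [StarRing R] {s : ι → R} (hs : star s ⬝ᵥ s = 1) (k : R) :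
    ((2 : R) • vecMulVec s (star s) - 1) *ᵥ (k • s) = k • s := by
  rw [reflection_mulVec, dotProduct_smul, hs, smul_eq_mul, mul_one, mul_smul, two_smul,
    add_sub_cancel_right]

theorem reflection_mulVec_of_dotProduct_eq_zero {ι R : Type*} [Fintype ι] [DecidableEq ι]
    [CommRing R] [StarRing R] {s w : ι → R} (hw : star s ⬝ᵥ w = 0) :
    ((2 : R) • vecMulVec s (star s) - 1) *ᵥ w = -w := by
  rw [reflection_mulVec, hw, mul_zero, zero_smul, zero_sub]

section GroverCoin

variable {l : ℝ}

theorem star_scState : star (scState l) = scState l := by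
  ext c
  simp only [scState, Pi.star_apply]
  split_ifs <;> simp [Complex.conj_ofReal]

theorem sqrt_four_add_ne_zero (hl : 0 ≤ l) : ((√(4 + l) : ℝ) : ℂ) ≠ 0 := by
  have : 0 < √(4 + l) := Real.sqrt_pos.mpr (by linarith)
  exact_mod_cast this.ne'

theorem star_scState_dotProduct_self (hl : 0 ≤ l) : star (scState l) ⬝ᵥ scState l = 1 := by
  have h4 := sqrt_four_add_ne_zero hl
  have hsq : ((√(4 + l) : ℝ) : ℂ) ^ 2 = 4 + l := by
    rw [← Complex.ofReal_pow, Real.sq_sqrt (by linarith)]; push_cast; ring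
  have hsq' : ((√l : ℝ) : ℂ) ^ 2 = l := by rw [← Complex.ofReal_pow, Real.sq_sqrt hl]
  rw [star_scState, dotProduct, Fin.sum_univ_five]
  simp only [scState, Fin.reduceEq, if_true, if_false]
  field_simp
  linear_combination hsq' - hsq

theorem scA_eq_smul_scState (hl : 0 ≤ l) (a : ℝ) :
    scA l a = ((a : ℂ) * (√(4 + l) : ℝ)) • scState l := by
  have h4 := sqrt_four_add_ne_zero hl
  ext c
  simp only [scA, scState, Pi.smul_apply, smul_eq_mul]
  split_ifs <;> field_simp

theorem star_scState_dotProduct_single {d : Fin 5} (hd : d ≠ 4) :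
    star (scState l) ⬝ᵥ Pi.single d 1 = 1 / ((√(4 + l) : ℝ) : ℂ) := by
  rw [star_scState, dotProduct_single, mul_one, scState, if_neg hd]

theorem groverCoin_mulVec_scA (hl : 0 ≤ l) (a : ℝ) : groverCoin l *ᵥ scA l a = scA l a := by
  rw [groverCoin, scA_eq_smul_scState hl,
    reflection_mulVec_of_dotProduct_eq_one (star_scState_dotProduct_self hl)]

theorem groverCoin_mulVec_scA_sub_single (hl : 0 ≤ l) (a : ℝ) {d : Fin 5} (hd : d ≠ 4) :
    groverCoin l *ᵥ (scA l a - (((4 + l : ℝ) : ℂ) * a) • Pi.single d 1)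
      = -(scA l a - (((4 + l : ℝ) : ℂ) * a) • Pi.single d 1) := by
  have h4 := sqrt_four_add_ne_zero hl
  have hsq : ((√(4 + l) : ℝ) : ℂ) ^ 2 = ((4 + l : ℝ) : ℂ) := by
    rw [← Complex.ofReal_pow, Real.sq_sqrt (by linarith)]
  apply reflection_mulVec_of_dotProduct_eq_zero
  rw [dotProduct_sub, dotProduct_smul, star_scState_dotProduct_single hd, scA_eq_smul_scState hl,
    dotProduct_smul, star_scState_dotProduct_self hl, smul_eq_mul, smul_eq_mul]
  field_simp
  linear_combination (a : ℂ) * hsq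

end GroverCoin

theorem shiftIdx_shiftIdx {n : ℕ} (x : WalkIdx n) : shiftIdx n (shiftIdx n x) = x := by
  obtain ⟨i, j, c⟩ := x
  fin_cases c <;> simp [shiftIdx]

section Operators

variable {n : ℕ} [NeZero n]

theorem shiftOp_mulVec_apply (v : WalkIdx n → ℂ) (x : WalkIdx n) :
    (shiftOp n *ᵥ v) x = v (shiftIdx n x) := by
  have hshift : ∀ y, x = shiftIdx n y ↔ shiftIdx n x = y := fun y =>
    ⟨fun h => h ▸ shiftIdx_shiftIdx y, fun h => h ▸ (shiftIdx_shiftIdx x).symm⟩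
  simp [mulVec, dotProduct, shiftOp, hshift]

theorem queryOp_mulVec_apply (M : Finset (ZMod n × ZMod n)) (v : WalkIdx n → ℂ)
    (x : WalkIdx n) :
    (queryOp n M *ᵥ v) x = (if (x.1, x.2.1) ∈ M then -1 else 1) * v x := by
  simp [mulVec, dotProduct, queryOp]

theorem coinOp_mulVec_apply (l : ℝ) (w : WalkIdx n → ℂ) (i j : ZMod n) (c : Fin 5) :
    (coinOp n l *ᵥ w) (i, j, c) = (groverCoin l *ᵥ fun c' => w (i, j, c')) c := by
  simp [mulVec, dotProduct, coinOp, Fintype.sum_prod_type, ite_and]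

theorem coinOp_mulVec_queryOp_mulVec_eq_self (l : ℝ) (M : Finset (ZMod n × ZMod n))
    (v : WalkIdx n → ℂ)
    (hmarked : ∀ p ∈ M, groverCoin l *ᵥ (fun c => v (p.1, p.2, c)) = -fun c => v (p.1, p.2, c))
    (hunmarked :
      ∀ p ∉ M, groverCoin l *ᵥ (fun c => v (p.1, p.2, c)) = fun c => v (p.1, p.2, c)) :
    coinOp n l *ᵥ (queryOp n M *ᵥ v) = v := by
  ext ⟨i, j, c⟩
  simp only [coinOp_mulVec_apply, queryOp_mulVec_apply]
  by_cases hp : (i, j) ∈ M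
  · simp only [hp, if_true, neg_one_mul]
    rw [← Pi.neg_def, mulVec_neg, hmarked _ hp, neg_neg]
  · simp only [hp, if_false, one_mul]
    rw [hunmarked _ hp]

end Operators

section Stationary

variable {n : ℕ}

def markedBlock (n : ℕ) : Finset (ZMod n × ZMod n) := {(0, 0), (1, 0), (1, 1), (1, 2)}

theorem ZMod.zero_ne_one_and_zero_ne_two_and_one_ne_two (hn : 3 ≤ n) :
    (0 : ZMod n) ≠ 1 ∧ (0 : ZMod n) ≠ 2 ∧ (1 : ZMod n) ≠ 2 := by
  have h1 : (1 : ZMod n).val = 1 := by rw [ZMod.val_one_eq_one_mod, Nat.mod_eq_of_lt (by omega)]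
  have h2 : (2 : ZMod n).val = 2 := by rw [ZMod.val_two_eq_two_mod, Nat.mod_eq_of_lt (by omega)]
  refine ⟨fun h => ?_, fun h => ?_, fun h => ?_⟩ <;>
    · have := congrArg ZMod.val h
      simp only [ZMod.val_zero, h1, h2] at this
      omega

theorem phiStatBlock_shiftIdx (l a : ℝ) (x : WalkIdx n) :
    phiStatBlock n l a (shiftIdx n x) = phiStatBlock n l a x := by
  obtain ⟨i, j, c⟩ := x
  have hj1 : j + 1 = 2 ↔ j = 1 := by rw [← one_add_one_eq_two, add_left_inj]
  have hj2 : j - 1 = 1 ↔ j = 2 := by rw [sub_eq_iff_eq_add, one_add_one_eq_two]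
  have hi1 : i - 1 = 0 ↔ i = 1 := sub_eq_zero
  have hi2 : i + 1 = 1 ↔ i = 0 := add_eq_right
  fin_cases c <;> simp [shiftIdx, phiStatBlock, scA, Prod.ext_iff, hj1, hj2, hi1, hi2, and_comm]

theorem phiStatBlock_of_notMem (l a : ℝ) {p : ZMod n × ZMod n} (hp : p ∉ markedBlock n) :
    (fun c => phiStatBlock n l a (p.1, p.2, c)) = scA l a := by
  simp only [markedBlock, Finset.mem_insert, Finset.mem_singleton, Prod.ext_iff, not_or] at hp
  ext c
  simp_all [phiStatBlock]

theorem phiStatBlock_of_mem (hn : 3 ≤ n) (l a : ℝ) {p : ZMod n × ZMod n}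
    (hp : p ∈ markedBlock n) :
    ∃ d ≠ 4, (fun c => phiStatBlock n l a (p.1, p.2, c))
      = scA l a - (((4 + l : ℝ) : ℂ) * a) • Pi.single d 1 := by
  obtain ⟨h01, h02, h12⟩ := ZMod.zero_ne_one_and_zero_ne_two_and_one_ne_two hn
  simp only [markedBlock, Finset.mem_insert, Finset.mem_singleton] at hp
  rcases hp with rfl | rfl | rfl | rfl
  · refine ⟨3, by decide, ?_⟩
    ext c
    simp [phiStatBlock, Pi.single_apply, h01]
  · refine ⟨2, by decide, ?_⟩
    ext c
    simp [phiStatBlock, Pi.single_apply, h01, h02, eq_comm]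
  · refine ⟨0, by decide, ?_⟩
    ext c
    simp [phiStatBlock, Pi.single_apply, h01, h12, eq_comm]
  · refine ⟨1, by decide, ?_⟩
    ext c
    simp [phiStatBlock, Pi.single_apply, h01, h02, h12, eq_comm]

end Stationary

/-- For the marked set `M = {(0,0),(1,0),(1,1),(1,2)}` on the `n×n` torus
(`n ≥ 4`), the stationary state is fixed by the search step. -/
theorem phiStatBlock_fixed (n : ℕ) [NeZero n] (hn : 4 ≤ n) (l a : ℝ) (hl : 0 < l) :
    (searchOp n l {((0 : ZMod n), (0 : ZMod n)), (1, 0), (1, 1), (1, 2)}).mulVec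
        (phiStatBlock n l a) = phiStatBlock n l a := by
  have hCQ : coinOp n l *ᵥ (queryOp n (markedBlock n) *ᵥ phiStatBlock n l a)
      = phiStatBlock n l a := by
    refine coinOp_mulVec_queryOp_mulVec_eq_self l _ _ (fun p hp => ?_) (fun p hp => ?_)
    · obtain ⟨d, hd, hphi⟩ := phiStatBlock_of_mem (by omega) l a hp
      rw [hphi, groverCoin_mulVec_scA_sub_single hl.le a hd]
    · rw [phiStatBlock_of_notMem l a hp, groverCoin_mulVec_scA hl.le]
  show searchOp n l (markedBlock n) *ᵥ _ = _
  ext x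
  rw [searchOp, ← mulVec_mulVec, ← mulVec_mulVec, hCQ, shiftOp_mulVec_apply,
    phiStatBlock_shiftIdx]
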